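/- arXiv:1108.6215 — 5 statements merged into one kernel-verified Lean document; each statement's English description precedes it below -/
import Mathlib

section
/- Let K/k be a finite extension of number fields of relative degree n, and let p be a prime ideal of O_k that is totally ramified in K/k, say pO_K = P^n. Suppose β ≡ α^n mod p for some α, β ∈ O_k \ p, and suppose there exists no b ∈ O_k with b ≡ β mod p, b = N_{K/k}(δ) for some δ ∈ O_K, and |N_{k/ℚ}(b)| < N(p). Then K is not norm-Euclidean. -/
open NumberField

/-!
If `K` were norm-Euclidean, `𝓞 K` would be a principal ideal domain, say `P = (ϖ)`, and
Euclidean division of `α` by `ϖ` would give `δ ≡ α mod P` with `|N_{K/ℚ}(δ)| < N(ϖ) = N(P) = N(p)`.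
Since `p` is totally ramified, every conjugate of `δ` is congruent to `α` modulo a prime above `p`,
so `b = N_{K/k}(δ) ≡ α ^ n ≡ β mod p`, and `|N_{k/ℚ}(b)| = |N_{K/ℚ}(δ)| < N(p)`: such a `b`
was assumed not to exist.
-/

/-- A number field is norm-Euclidean if every element of the field is within
norm-distance less than 1 of an algebraic integer. -/
def IsNormEuclidean (K : Type*) [Field K] [NumberField K] : Prop :=
  ∀ ξ : K, ∃ η : 𝓞 K, |Algebra.norm ℚ (ξ - (η : K))| < 1

namespace NumberField.RingOfIntegers

theorem abs_norm_eq_natAbs_norm {K : Type*} [Field K] [NumberField K] (x : 𝓞 K) :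
    |Algebra.norm ℚ (x : K)| = ((Algebra.norm ℤ x).natAbs : ℚ) := by
  rw [← Algebra.coe_norm_int, Nat.cast_natAbs, Int.cast_abs]

variable {k K : Type*} [Field k] [Field K] [NumberField k] [NumberField K] [Algebra k K]

theorem absNorm_eq_of_map_eq_pow_finrank {p : Ideal (𝓞 k)} {P : Ideal (𝓞 K)}
    (h : p.map (algebraMap (𝓞 k) (𝓞 K)) = P ^ Module.finrank k K) :
    Ideal.absNorm P = Ideal.absNorm p := by
  have : FiniteDimensional k K := Module.Finite.of_restrictScalars_finite ℚ k K
  have hpow := Ideal.absNorm_algebraMap (𝓞 k) (𝓞 K) p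
  rw [h, map_pow, ← IsFractionRing.finrank_eq (𝓞 k) k (𝓞 K) K] at hpow
  exact Nat.pow_left_injective Module.finrank_pos.ne' hpow

theorem norm_sub_pow_finrank_mem_of_sub_mem_radical {p : Ideal (𝓞 k)} [p.IsPrime]
    {α : 𝓞 k} {δ : 𝓞 K}
    (hδ : δ - algebraMap (𝓞 k) (𝓞 K) α ∈ (p.map (algebraMap (𝓞 k) (𝓞 K))).radical) :
    RingOfIntegers.norm k δ - α ^ Module.finrank k K ∈ p := by
  have : FiniteDimensional k K := Module.Finite.of_restrictScalars_finite ℚ k K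
  let E := AlgebraicClosure K
  let C := integralClosure (𝓞 k) E
  obtain ⟨M, -, hM, hMp⟩ := Ideal.exists_ideal_over_prime_of_isIntegral (S := C) p ⊥ (by
    simp [← RingHom.ker_eq_comap_bot,
      (RingHom.injective_iff_ker_eq_bot _).mp (FaithfulSMul.algebraMap_injective (𝓞 k) C)])
  let Φ (σ : K →ₐ[k] E) : 𝓞 K →ₐ[𝓞 k] C :=
    let σ' := (σ.restrictScalars (𝓞 k)).comp (IsScalarTower.toAlgHom (𝓞 k) (𝓞 K) K)
    σ'.codRestrict C fun x => (Algebra.IsIntegral.isIntegral x).map σ'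
  -- `(Φ σ)⁻¹ M` is a prime of `𝓞 K` above `p`, so it contains the radical of `p 𝓞 K`.
  have hΦ (σ : K →ₐ[k] E) : Φ σ δ - algebraMap (𝓞 k) C α ∈ M := by
    have hle : p.map (algebraMap (𝓞 k) (𝓞 K)) ≤ M.comap (Φ σ) := by
      rw [Ideal.map_le_iff_le_comap, ← hMp]
      intro x hx
      rwa [Ideal.mem_comap, Ideal.mem_comap, AlgHom.commutes]
    rw [← AlgHom.commutes (Φ σ), ← map_sub]
    exact ((hM.comap _).radical_le_iff.mpr hle) hδ
  have hprod : algebraMap (𝓞 k) C (RingOfIntegers.norm k δ) = ∏ σ : K →ₐ[k] E, Φ σ δ := by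
    apply Subtype.coe_injective
    push_cast
    rw [IsScalarTower.algebraMap_apply (𝓞 k) k E]
    exact (congrArg (algebraMap k E) (RingOfIntegers.coe_norm k δ)).trans
      (Algebra.norm_eq_prod_embeddings k E _)
  rw [← hMp, Ideal.mem_comap, map_sub, map_pow, ← Ideal.Quotient.eq, hprod, map_prod,
    Finset.prod_congr rfl fun σ _ => Ideal.Quotient.eq.mpr (hΦ σ), Finset.prod_const,
    Finset.card_univ, AlgHom.card, map_pow]

end NumberField.RingOfIntegers

namespace IsNormEuclidean

variable {K : Type*} [Field K] [NumberField K]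

theorem exists_natAbs_norm_sub_mul_lt (h : IsNormEuclidean K) (a : 𝓞 K) {b : 𝓞 K}
    (hb : b ≠ 0) :
    ∃ η : 𝓞 K, (Algebra.norm ℤ (a - b * η)).natAbs < (Algebra.norm ℤ b).natAbs := by
  obtain ⟨η, hη⟩ := h ((a : K) / b)
  have hb' : (b : K) ≠ 0 := RingOfIntegers.coe_ne_zero_iff.mpr hb
  have hbN : 0 < |Algebra.norm ℚ (b : K)| := abs_pos.mpr (Algebra.norm_ne_zero_iff.mpr hb')
  have hdiv : ((a - b * η : 𝓞 K) : K) = ((a : K) / b - η) * b := by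
    push_cast; field_simp
  refine ⟨η, ?_⟩
  rw [← Nat.cast_lt (α := ℚ), ← RingOfIntegers.abs_norm_eq_natAbs_norm,
    ← RingOfIntegers.abs_norm_eq_natAbs_norm, hdiv, map_mul, abs_mul]
  exact mul_lt_of_lt_one_left hbN hη

theorem isPrincipalIdealRing (h : IsNormEuclidean K) : IsPrincipalIdealRing (𝓞 K) := by
  classical
  refine ⟨fun I => ?_⟩
  rcases eq_or_ne I ⊥ with rfl | hI
  · exact bot_isPrincipal
  have hex : ∃ m, ∃ b ∈ I, b ≠ 0 ∧ (Algebra.norm ℤ b).natAbs = m :=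
    let ⟨b, hbI, hb⟩ := Submodule.exists_mem_ne_zero_of_ne_bot hI
    ⟨_, b, hbI, hb, rfl⟩
  obtain ⟨b, hbI, hb, hbm⟩ := Nat.find_spec hex
  refine ⟨b, le_antisymm (fun a ha => ?_) ((Ideal.span_singleton_le_iff_mem I).mpr hbI)⟩
  obtain ⟨η, hη⟩ := h.exists_natAbs_norm_sub_mul_lt a hb
  have hr : a - b * η = 0 := by
    by_contra hr
    exact Nat.find_min hex (hbm ▸ hη) ⟨_, I.sub_mem ha (I.mul_mem_right η hbI), hr, rfl⟩
  exact Ideal.mem_span_singleton'.mpr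
    ⟨η, by rw [mul_comm, ← sub_eq_zero, ← neg_sub, hr, neg_zero]⟩

theorem exists_sub_mem_natAbs_norm_lt_absNorm (h : IsNormEuclidean K) {I : Ideal (𝓞 K)}
    (hI : I ≠ ⊥) (a : 𝓞 K) :
    ∃ δ : 𝓞 K, δ - a ∈ I ∧ (Algebra.norm ℤ δ).natAbs < Ideal.absNorm I := by
  have := h.isPrincipalIdealRing
  obtain ⟨ϖ, rfl⟩ := IsPrincipalIdealRing.principal I
  have hϖ : ϖ ≠ 0 := by rintro rfl; exact hI (Submodule.span_zero_singleton _)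
  obtain ⟨η, hη⟩ := h.exists_natAbs_norm_sub_mul_lt a hϖ
  refine ⟨a - ϖ * η, ?_, ?_⟩
  · rw [sub_sub_cancel_left, neg_mem_iff]
    exact Ideal.mul_mem_right η _ (Ideal.mem_span_singleton_self ϖ)
  · rwa [Ideal.submodule_span_eq, Ideal.absNorm_span_singleton]

end IsNormEuclidean

theorem totally_ramified_norm_obstruction_general
    {k K : Type*} [Field k] [Field K] [NumberField k] [NumberField K] [Algebra k K]
    (n : ℕ) (hn : Module.finrank k K = n)
    (p : Ideal (𝓞 k)) (hp : p.IsPrime) (hp0 : p ≠ ⊥)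
    (P : Ideal (𝓞 K))
    (hram : Ideal.map (algebraMap (𝓞 k) (𝓞 K)) p = P ^ n)
    (α β : 𝓞 k) (hcong : β - α ^ n ∈ p)
    (hno : ¬ ∃ b : 𝓞 k, b - β ∈ p ∧
        (∃ δ : 𝓞 K, (b : k) = Algebra.norm k (δ : K)) ∧
        |Algebra.norm ℚ (b : k)| < (Ideal.absNorm p : ℚ)) :
    ¬ IsNormEuclidean K := by
  intro hNE
  subst hn
  have : FiniteDimensional k K := Module.Finite.of_restrictScalars_finite ℚ k K
  have hn0 : Module.finrank k K ≠ 0 := Module.finrank_pos.ne'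
  have hP0 : P ≠ ⊥ := by
    rintro rfl
    rw [← Ideal.zero_eq_bot, zero_pow hn0, Ideal.zero_eq_bot,
      Ideal.map_eq_bot_iff_of_injective (FaithfulSMul.algebraMap_injective _ _)] at hram
    exact hp0 hram
  obtain ⟨δ, hδP, hδ⟩ := hNE.exists_sub_mem_natAbs_norm_lt_absNorm hP0 (algebraMap _ _ α)
  have hδα : δ - algebraMap _ _ α ∈ (p.map (algebraMap (𝓞 k) (𝓞 K))).radical := by
    rw [hram, Ideal.radical_pow _ hn0]
    exact Ideal.le_radical hδP
  refine hno ⟨RingOfIntegers.norm k δ, ?_, ⟨δ, RingOfIntegers.coe_norm k δ⟩, ?_⟩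
  · simpa using p.sub_mem (RingOfIntegers.norm_sub_pow_finrank_mem_of_sub_mem_radical hδα) hcong
  · rw [RingOfIntegers.coe_norm, Algebra.norm_norm, RingOfIntegers.abs_norm_eq_natAbs_norm,
      ← RingOfIntegers.absNorm_eq_of_map_eq_pow_finrank hram]
    exact_mod_cast hδ

theorem totally_ramified_norm_obstruction
    {k K : Type*} [Field k] [Field K] [NumberField k] [NumberField K] [Algebra k K]
    (n : ℕ) (hn : Module.finrank k K = n)
    (p : Ideal (𝓞 k)) (hp : p.IsPrime) (hp0 : p ≠ ⊥)
    (P : Ideal (𝓞 K)) (hP : P.IsPrime)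
    (hram : Ideal.map (algebraMap (𝓞 k) (𝓞 K)) p = P ^ n)
    (α β : 𝓞 k) (hα : α ∉ p) (hβ : β ∉ p) (hcong : β - α ^ n ∈ p)
    (hno : ¬ ∃ b : 𝓞 k, b - β ∈ p ∧
        (∃ δ : 𝓞 K, (b : k) = Algebra.norm k (δ : K)) ∧
        |Algebra.norm ℚ (b : k)| < (Ideal.absNorm p : ℚ)) :
    ¬ IsNormEuclidean K :=
  totally_ramified_norm_obstruction_general n hn p hp hp0 P hram α β hcong hno
end

section
/- Let L be a CM-field with maximal real subfield K. If L is norm-Euclidean but K is not norm-Euclidean, then N_{K/ℚ}(disc(L/K)) < 4^{[K:ℚ]}. -/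
open NumberField

def IsTotallyImaginary (K : Type*) [Field K] [NumberField K] : Prop :=
  ∀ φ : K →+* ℂ, ¬ ComplexEmbedding.IsReal φ

def IsTotallyReal (K : Type*) [Field K] [NumberField K] : Prop :=
  ∀ φ : K →+* ℂ, ComplexEmbedding.IsReal φ

/-!
Take `ξ ∈ K` witnessing that `K` is not norm-Euclidean and `η ∈ 𝓞 L` with `|N(ξ - η)| < 1`.
Then `η ∉ K`, since otherwise `N_{L/ℚ}(ξ - η) = N_{K/ℚ}(ξ - η)² ≥ 1`; so `η` generates `L/K` and
`f'(η)` lies in the different, `f` being the minimal polynomial of `η` over `K`. Extend an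
embedding `φ` of `K` to `ψ` on `L`: the roots of `f^φ` are `ψ η` and its conjugate, so
`φ(N_{L/K} f'(η)) = |ψ η - conj (ψ η)|² ≤ 4 |φ ξ - ψ η|² = 4 |φ (N_{L/K}(ξ - η))|`, because `φ ξ` is
real. Taking the product over the `[K:ℚ]` embeddings,
`N(disc(L/K)) ≤ |N(f'(η))| ≤ 4^[K:ℚ] |N(ξ - η)| < 4^[K:ℚ]`.
-/

open Polynomial IntermediateField ComplexConjugate NumberField.ComplexEmbedding

theorem Polynomial.eval_derivative_eq_sub_of_natDegree_eq_two {R : Type*} [CommRing R] [IsDomain R]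
    {F : R[X]} (hm : F.Monic) (hd : F.natDegree = 2) {a b : R} (ha : F.IsRoot a) (hb : F.IsRoot b)
    (hab : a ≠ b) : F.derivative.eval a = a - b := by
  have hF : F = X ^ 2 + C (F.coeff 1) * X + C (F.coeff 0) := by
    conv_lhs => rw [hm.as_sum, hd]
    simp only [Finset.sum_range_succ, Finset.range_one, Finset.sum_singleton, pow_zero, mul_one,
      pow_one]
    ring
  rw [hF] at ha hb ⊢
  simp only [IsRoot.def, eval_add, eval_pow, eval_mul, eval_C, eval_X] at ha hb
  simp only [derivative_add, derivative_X_pow, derivative_mul, derivative_C, derivative_X, eval_add,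
    eval_mul, eval_C, eval_pow, eval_X, eval_zero, zero_mul, zero_add, mul_one]
  have hsum : (a - b) * (a + b + F.coeff 1) = (a - b) * 0 := by linear_combination ha - hb
  linear_combination mul_left_cancel₀ (sub_ne_zero.mpr hab) hsum

theorem IntermediateField.adjoin_simple_eq_top_of_finrank_eq_two {K L : Type*} [Field K] [Field L]
    [Algebra K L] (hdeg : Module.finrank K L = 2) {α : L} (hα : α ∉ Set.range (algebraMap K L)) :
    K⟮α⟯ = ⊤ := by
  have := isSimpleOrder_of_finrank_prime K L (hdeg ▸ Nat.prime_two)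
  refine (eq_bot_or_eq_top K⟮α⟯).resolve_left fun h => hα ?_
  rwa [adjoin_simple_eq_bot_iff, mem_bot] at h

theorem Complex.norm_sub_conj_le_two_mul_norm_sub {r : ℂ} (hr : conj r = r) (z : ℂ) :
    ‖z - conj z‖ ≤ 2 * ‖r - z‖ := by
  have h : z - conj z = (z - r) - conj (z - r) := by rw [map_sub, hr]; ring
  calc ‖z - conj z‖ ≤ ‖z - r‖ + ‖conj (z - r)‖ := h ▸ norm_sub_le _ _
    _ = 2 * ‖r - z‖ := by rw [Complex.norm_conj, norm_sub_rev]; ring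

section QuadraticExtension

variable {K L : Type*} [Field K] [Field L] [Algebra K L] [Algebra K ℂ]

def conjAlgHomOfReal (hK : ∀ k : K, conj (algebraMap K ℂ k) = algebraMap K ℂ k) : ℂ →ₐ[K] ℂ :=
  { starRingEnd ℂ with commutes' := hK }

variable (hK : ∀ k : K, conj (algebraMap K ℂ k) = algebraMap K ℂ k) {ψ : L →ₐ[K] ℂ}

include hK in
theorem conjAlgHomOfReal_comp_ne (hψ : ¬ IsReal ψ.toRingHom) :
    (conjAlgHomOfReal hK).comp ψ ≠ ψ := fun h =>
  hψ <| isReal_iff.mpr <| RingHom.ext fun x => AlgHom.congr_fun h x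

include hK in
theorem algebraMap_norm_eq_mul_conj [Algebra.IsSeparable K L] (hdeg : Module.finrank K L = 2)
    (hψ : ¬ IsReal ψ.toRingHom) (y : L) :
    algebraMap K ℂ (Algebra.norm K y) = ψ y * conj (ψ y) := by
  classical
  have : FiniteDimensional K L := Module.finite_of_finrank_eq_succ hdeg
  have hne := conjAlgHomOfReal_comp_ne hK hψ
  have huniv : (Finset.univ : Finset (L →ₐ[K] ℂ)) = {(conjAlgHomOfReal hK).comp ψ, ψ} := by
    refine (Finset.eq_univ_of_card _ ?_).symm
    rw [Finset.card_pair hne, AlgHom.card, hdeg]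
  rw [Algebra.norm_eq_prod_embeddings, huniv, Finset.prod_pair hne, mul_comm]
  rfl

include hK in
theorem conj_apply_ne_apply_of_adjoin_eq_top {α : L} (hα : Algebra.adjoin K {α} = ⊤)
    (hψ : ¬ IsReal ψ.toRingHom) : conj (ψ α) ≠ ψ α := fun h =>
  conjAlgHomOfReal_comp_ne hK hψ <| AlgHom.ext_of_adjoin_eq_top hα fun _ hx => by
    rw [Set.mem_singleton_iff.mp hx]; exact h

include hK in
theorem apply_aeval_derivative_minpoly (hdeg : Module.finrank K L = 2) {α : L} (hα : K⟮α⟯ = ⊤)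
    (hψ : ¬ IsReal ψ.toRingHom) :
    ψ (aeval α (derivative (minpoly K α))) = ψ α - conj (ψ α) := by
  have : FiniteDimensional K L := Module.finite_of_finrank_eq_succ hdeg
  have hint : IsIntegral K α := .of_finite K α
  have hdeg' : (minpoly K α).natDegree = 2 :=
    hdeg ▸ (Field.primitive_element_iff_minpoly_natDegree_eq K α).mp hα
  have hroot : ∀ σ : L →ₐ[K] ℂ, ((minpoly K α).map (algebraMap K ℂ)).IsRoot (σ α) := fun σ => by
    rw [IsRoot.def, eval_map_algebraMap, aeval_algHom_apply, minpoly.aeval, map_zero]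
  rw [← aeval_algHom_apply, ← eval_map_algebraMap, ← derivative_map]
  exact eval_derivative_eq_sub_of_natDegree_eq_two ((minpoly.monic hint).map _)
    (by rw [(minpoly.monic hint).natDegree_map, hdeg']) (hroot ψ)
    (hroot ((conjAlgHomOfReal hK).comp ψ))
    (conj_apply_ne_apply_of_adjoin_eq_top hK (IntermediateField.adjoin_eq_top_iff.mp hα) hψ).symm

include hK in
theorem norm_algebraMap_norm_aeval_derivative_minpoly_le [Algebra.IsSeparable K L]
    (hdeg : Module.finrank K L = 2) {α : L} (hα : K⟮α⟯ = ⊤) (hψ : ¬ IsReal ψ.toRingHom) (ξ : K) :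
    ‖algebraMap K ℂ (Algebra.norm K (aeval α (derivative (minpoly K α))))‖ ≤
      4 * ‖algebraMap K ℂ (Algebra.norm K (algebraMap K L ξ - α))‖ := by
  have hnorm (y : L) : ‖algebraMap K ℂ (Algebra.norm K y)‖ = ‖ψ y‖ ^ 2 := by
    rw [algebraMap_norm_eq_mul_conj hK hdeg hψ, norm_mul, Complex.norm_conj, sq]
  rw [hnorm, hnorm, apply_aeval_derivative_minpoly hK hdeg hα hψ, map_sub, AlgHom.commutes]
  calc ‖ψ α - conj (ψ α)‖ ^ 2 ≤ (2 * ‖algebraMap K ℂ ξ - ψ α‖) ^ 2 :=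
        pow_le_pow_left₀ (norm_nonneg _) (Complex.norm_sub_conj_le_two_mul_norm_sub (hK ξ) _) 2
    _ = 4 * ‖algebraMap K ℂ ξ - ψ α‖ ^ 2 := by ring

end QuadraticExtension

theorem norm_embedding_norm_aeval_derivative_minpoly_le {K L : Type*} [Field K] [Field L]
    [Algebra K L] [Algebra.IsSeparable K L] (hdeg : Module.finrank K L = 2)
    (hL : ∀ ψ : L →+* ℂ, ¬ IsReal ψ) {φ : K →+* ℂ} (hφ : IsReal φ) {α : L} (hα : K⟮α⟯ = ⊤)
    (ξ : K) :
    ‖φ (Algebra.norm K (aeval α (derivative (minpoly K α))))‖ ≤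
      4 * ‖φ (Algebra.norm K (algebraMap K L ξ - α))‖ := by
  let _ : Algebra K ℂ := φ.toAlgebra
  have : FiniteDimensional K L := Module.finite_of_finrank_eq_succ hdeg
  exact norm_algebraMap_norm_aeval_derivative_minpoly_le
    (fun k => RingHom.congr_fun (isReal_iff.mp hφ) k) (ψ := IsAlgClosed.lift) hdeg hα (hL _) ξ

namespace NumberField

variable {K L : Type*} [Field K] [Field L] [NumberField K] [NumberField L] [Algebra K L]

theorem abs_norm_eq_prod_norm_embeddings (x : K) :
    |(Algebra.norm ℚ x : ℝ)| = ∏ φ : K →+* ℂ, ‖φ x‖ := by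
  rw [Fintype.prod_equiv (RingHom.equivRatAlgHom K ℂ) (fun φ => ‖φ x‖) (fun σ => ‖σ x‖)
      fun _ => rfl,
    ← norm_prod, ← Algebra.norm_eq_prod_embeddings, eq_ratCast, ← Complex.ofReal_ratCast,
    Complex.norm_real, Real.norm_eq_abs]

theorem abs_norm_le_pow_mul_abs_norm_of_forall_embedding {x y : K} {c : ℝ}
    (h : ∀ φ : K →+* ℂ, ‖φ x‖ ≤ c * ‖φ y‖) :
    |(Algebra.norm ℚ x : ℝ)| ≤ c ^ Module.finrank ℚ K * |(Algebra.norm ℚ y : ℝ)| := by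
  rw [abs_norm_eq_prod_norm_embeddings, abs_norm_eq_prod_norm_embeddings,
    ← NumberField.Embeddings.card K ℂ, ← Finset.card_univ, ← Finset.prod_const,
    ← Finset.prod_mul_distrib]
  exact Finset.prod_le_prod (fun _ _ => norm_nonneg _) fun φ _ => h φ

theorem absNorm_spanNorm_le_abs_norm_of_mem {I : Ideal (𝓞 L)} {x : 𝓞 L} (hx : x ∈ I)
    (hx0 : x ≠ 0) :
    (Ideal.absNorm (Ideal.spanNorm (𝓞 K) I) : ℝ) ≤
      |(Algebra.norm ℚ (Algebra.norm K (x : L)) : ℝ)| := by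
  set c := Algebra.intNorm (𝓞 K) (𝓞 L) x
  have hcK : algebraMap (𝓞 K) K c = Algebra.norm K (x : L) :=
    Algebra.algebraMap_intNorm (K := K) (L := L) x
  have hc0 : Algebra.norm ℤ c ≠ 0 := by
    rw [Ne, Algebra.norm_eq_zero_iff, ← RingOfIntegers.coe_eq_zero_iff, hcK,
      Algebra.norm_eq_zero_iff]
    exact_mod_cast hx0
  have hdvd : Ideal.absNorm (Ideal.spanNorm (𝓞 K) I) ∣ (Algebra.norm ℤ c).natAbs := by
    rw [← Ideal.absNorm_span_singleton, ← Ideal.spanNorm_singleton]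
    exact Ideal.absNorm_dvd_absNorm_of_le
      (Ideal.spanNorm_mono _ ((Ideal.span_singleton_le_iff_mem _).mpr hx))
  calc (Ideal.absNorm (Ideal.spanNorm (𝓞 K) I) : ℝ) ≤ (Algebra.norm ℤ c).natAbs :=
        mod_cast Nat.le_of_dvd (Int.natAbs_pos.mpr hc0) hdvd
    _ = |(Algebra.norm ℚ (Algebra.norm K (x : L)) : ℝ)| := by
        rw [← hcK, ← Algebra.coe_norm_int, Nat.cast_natAbs]; push_cast; rfl

theorem absNorm_spanNorm_differentIdeal_le {η : 𝓞 L} (hη : K⟮(η : L)⟯ = ⊤) :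
    (Ideal.absNorm (Ideal.spanNorm (𝓞 K) (differentIdeal (𝓞 K) (𝓞 L))) : ℝ) ≤
      |(Algebra.norm ℚ (Algebra.norm K (aeval (η : L) (derivative (minpoly K (η : L))))) : ℝ)| := by
  have hDL : algebraMap (𝓞 L) L (aeval η (derivative (minpoly (𝓞 K) η))) =
      aeval (η : L) (derivative (minpoly K (η : L))) := by
    rw [minpoly.isIntegrallyClosed_eq_field_fractions K L (IsIntegralClosure.isIntegral (𝓞 K) L η),
      derivative_map, aeval_map_algebraMap, aeval_algebraMap_apply]
  have hD0 : aeval (η : L) (derivative (minpoly K (η : L))) ≠ 0 :=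
    (Algebra.IsSeparable.isSeparable K _).aeval_derivative_ne_zero (minpoly.aeval K _)
  rw [← hDL]
  refine absNorm_spanNorm_le_abs_norm_of_mem
    (aeval_derivative_mem_differentIdeal (𝓞 K) K L η (IntermediateField.adjoin_eq_top_iff.mp hη))
    fun h => hD0 (by rw [← hDL, h, map_zero])

theorem coe_notMem_range_algebraMap_of_abs_norm_sub_lt_one (hdeg : Module.finrank K L = 2) {ξ : K}
    (hξ : ∀ y : 𝓞 K, 1 ≤ |Algebra.norm ℚ (ξ - y)|) {η : 𝓞 L}
    (hη : |Algebra.norm ℚ (algebraMap K L ξ - η)| < 1) : (η : L) ∉ Set.range (algebraMap K L) := by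
  rintro ⟨y, hy⟩
  have hnorm : Algebra.norm ℚ (algebraMap K L ξ - η) = Algebra.norm ℚ (ξ - y) ^ 2 := by
    rw [← hy, ← map_sub, ← Algebra.norm_norm (S := K), Algebra.norm_algebraMap, hdeg, map_pow]
  have hy1 : 1 ≤ |Algebra.norm ℚ (ξ - y)| :=
    hξ ⟨y, IsIntegral.tower_bot_of_field (B := L) (by rw [hy]; exact η.2)⟩
  rw [hnorm, abs_pow] at hη
  exact hη.not_ge (one_le_pow₀ hy1)

end NumberField

theorem cm_field_discriminant_bound
    {K L : Type*} [Field K] [Field L] [NumberField K] [NumberField L] [Algebra K L]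
    (hK : _root_.IsTotallyReal K) (hL : IsTotallyImaginary L)
    (hdeg : Module.finrank K L = 2)
    (hLE : IsNormEuclidean L) (hKE : ¬ IsNormEuclidean K) :
    (Ideal.absNorm (Ideal.spanNorm (𝓞 K) (differentIdeal (𝓞 K) (𝓞 L))) : ℝ) <
      4 ^ Module.finrank ℚ K := by
  obtain ⟨ξ, hξ⟩ : ∃ ξ : K, ∀ y : 𝓞 K, 1 ≤ |Algebra.norm ℚ (ξ - y)| := by
    simpa [IsNormEuclidean] using hKE
  obtain ⟨η, hη⟩ := hLE (algebraMap K L ξ)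
  have hgen : K⟮(η : L)⟯ = ⊤ := adjoin_simple_eq_top_of_finrank_eq_two hdeg
    (coe_notMem_range_algebraMap_of_abs_norm_sub_lt_one hdeg hξ hη)
  calc (Ideal.absNorm (Ideal.spanNorm (𝓞 K) (differentIdeal (𝓞 K) (𝓞 L))) : ℝ)
      ≤ |(Algebra.norm ℚ (Algebra.norm K (aeval (η : L) (derivative (minpoly K (η : L))))) : ℝ)| :=
        absNorm_spanNorm_differentIdeal_le hgen
    _ ≤ 4 ^ Module.finrank ℚ K * |(Algebra.norm ℚ (Algebra.norm K (algebraMap K L ξ - η)) : ℝ)| :=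
        abs_norm_le_pow_mul_abs_norm_of_forall_embedding fun φ =>
          norm_embedding_norm_aeval_derivative_minpoly_le hdeg hL (hK φ) hgen ξ
    _ < 4 ^ Module.finrank ℚ K := by
        rw [Algebra.norm_norm, ← Rat.cast_abs]
        exact mul_lt_of_lt_one_right (by positivity) (mod_cast hη)
end

section
/- Let L be a CM-field with maximal real subfield K. If the relative different diff(L/K) is divisible by 2 (i.e. 2O_L divides diff(L/K)), then M(L) ≥ M(K)^2, where M(F) = sup over ξ ∈ F of inf over α ∈ O_F of |N_{F/ℚ}(ξ−α)| is the Euclidean minimum of F. -/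
open NumberField

/-- The Euclidean minimum of a number field. -/
noncomputable def eucMin (K : Type*) [Field K] [NumberField K] : ℝ :=
  ⨆ ξ : K, ⨅ η : 𝓞 K, |((Algebra.norm ℚ (ξ - (η : K)) : ℚ) : ℝ)|

/-! Let `ξ ∈ K` and `η ∈ 𝓞 L`. Since `2` divides the different, `(1/2) 𝓞 L` lies in the
codifferent, so `t = Tr_{L/K}(η) / 2` is an integer of `K`, and `Tr_{L/K}(ξ - η) / 2 = ξ - t`.
Over each (real) embedding `σ` of `K` the two embeddings of `L` above it are `τ` and `conj ∘ τ`, so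
`σ(N_{L/K} x) = |τ x|² ≥ (Re τ x)² = σ(Tr_{L/K} x / 2)²`. Multiplying over `σ` gives
`|N_{L/ℚ}(ξ - η)| ≥ N_{K/ℚ}(ξ - t)² ≥ M(ξ, K)²`, hence `M(ξ, L) ≥ M(ξ, K)²`. -/

open ComplexConjugate
open scoped nonZeroDivisors

theorem abs_norm_le_of_abs_repr_le {R S ι : Type*} [Field R] [LinearOrder R]
    [IsStrictOrderedRing R] [CommRing S] [Algebra R S] [Fintype ι] [DecidableEq ι]
    (b : Module.Basis ι R S) {d : S} {r : R} (h : ∀ i, |b.repr d i| ≤ r) :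
    |Algebra.norm R d| ≤ (Fintype.card ι).factorial •
      (r * ∑ i, ∑ j, ∑ k, |Algebra.leftMulMatrix b (b i) j k|) ^ Fintype.card ι := by
  have hentry : ∀ j k, Algebra.leftMulMatrix b d j k =
      ∑ i, b.repr d i * Algebra.leftMulMatrix b (b i) j k := by
    intro j k
    conv_lhs => rw [← b.sum_repr d]
    simp only [map_sum, map_smul, Matrix.sum_apply, Matrix.smul_apply, smul_eq_mul]
  rw [Algebra.norm_eq_matrix_det b d]
  refine Matrix.det_le (abv := AbsoluteValue.abs) fun j k => ?_
  calc |Algebra.leftMulMatrix b d j k|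
      ≤ ∑ i, |b.repr d i| * |Algebra.leftMulMatrix b (b i) j k| := by
        rw [hentry]
        exact (Finset.abs_sum_le_sum_abs _ _).trans_eq (by simp only [abs_mul])
    _ ≤ ∑ i, r * ∑ j, ∑ k, |Algebra.leftMulMatrix b (b i) j k| := by
        gcongr with i
        · exact (abs_nonneg _).trans (h i)
        · exact h i
        · exact (Finset.single_le_sum (f := fun k => |Algebra.leftMulMatrix b (b i) j k|)
            (fun _ _ => abs_nonneg _) (Finset.mem_univ k)).trans
            (Finset.single_le_sum (f := fun j => ∑ k, |Algebra.leftMulMatrix b (b i) j k|)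
              (fun _ _ => Finset.sum_nonneg fun _ _ => abs_nonneg _) (Finset.mem_univ j))
    _ = r * ∑ i, ∑ j, ∑ k, |Algebra.leftMulMatrix b (b i) j k| := (Finset.mul_sum ..).symm

/-- `M(ξ, F)`, so that `eucMin F = ⨆ ξ, eucMinAt ξ`. -/
noncomputable def eucMinAt {F : Type*} [Field F] [NumberField F] (ξ : F) : ℝ :=
  ⨅ α : 𝓞 F, |((Algebra.norm ℚ (ξ - (α : F)) : ℚ) : ℝ)|

section EucMin

variable {F : Type*} [Field F] [NumberField F]

theorem eucMinAt_nonneg (ξ : F) : 0 ≤ eucMinAt ξ :=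
  le_ciInf fun _ => abs_nonneg _

theorem eucMinAt_le (ξ : F) (α : 𝓞 F) :
    eucMinAt ξ ≤ |((Algebra.norm ℚ (ξ - (α : F)) : ℚ) : ℝ)| :=
  ciInf_le ⟨0, by rintro _ ⟨_, rfl⟩; exact abs_nonneg _⟩ α

theorem exists_abs_repr_sub_le (ξ : F) :
    ∃ α : 𝓞 F, ∀ i, |(integralBasis F).repr (ξ - (α : F)) i| ≤ 1 / 2 := by
  let α : 𝓞 F :=
    (RingOfIntegers.basis F).equivFun.symm fun i => round ((integralBasis F).repr ξ i)
  refine ⟨α, fun i => ?_⟩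
  have hα : (RingOfIntegers.basis F).repr α i = round ((integralBasis F).repr ξ i) := by
    rw [← Module.Basis.equivFun_apply, LinearEquiv.apply_symm_apply]
  rw [map_sub, Finsupp.sub_apply]
  simpa [hα] using abs_sub_round ((integralBasis F).repr ξ i)

/-- Needed because `⨆` of an unbounded family of reals is `0`. -/
theorem bddAbove_range_eucMinAt : BddAbove (Set.range (eucMinAt (F := F))) := by
  obtain ⟨C, hC⟩ : ∃ C : ℚ, ∀ d : F, (∀ i, |(integralBasis F).repr d i| ≤ 1 / 2) →
      |Algebra.norm ℚ d| ≤ C := ⟨_, fun _ => abs_norm_le_of_abs_repr_le _⟩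
  refine ⟨C, ?_⟩
  rintro _ ⟨ξ, rfl⟩
  obtain ⟨α, hα⟩ := exists_abs_repr_sub_le ξ
  exact (eucMinAt_le ξ α).trans (mod_cast hC _ hα)

theorem eucMinAt_le_eucMin (ξ : F) : eucMinAt ξ ≤ eucMin F :=
  le_ciSup bddAbove_range_eucMinAt ξ

theorem eucMin_le {c : ℝ} (hc : 0 ≤ c) (h : ∀ ξ : F, eucMinAt ξ ≤ c) : eucMin F ≤ c :=
  Real.iSup_le h hc

variable (F) in
theorem eucMin_nonneg : 0 ≤ eucMin F :=
  Real.iSup_nonneg eucMinAt_nonneg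

end EucMin

theorem exists_trace_eq_mul_of_span_dvd_differentIdeal {K L : Type*} [Field K] [Field L]
    [NumberField K] [NumberField L] [Algebra K L] {a : 𝓞 K} (ha : a ≠ 0)
    (hdiff : Ideal.span {algebraMap (𝓞 K) (𝓞 L) a} ∣ differentIdeal (𝓞 K) (𝓞 L)) (η : 𝓞 L) :
    ∃ t : 𝓞 K, Algebra.trace K L η = a * t := by
  have hle := Ideal.le_of_dvd hdiff
  rw [differentialIdeal_le_iff (K := K) (L := L) (by simpa [Ideal.span_singleton_eq_bot])] at hle
  have hmem : (a : K)⁻¹ • (η : L) ∈ ((((Ideal.span {algebraMap (𝓞 K) (𝓞 L) a} : Ideal (𝓞 L)) :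
      FractionalIdeal (𝓞 L)⁰ L)⁻¹ : FractionalIdeal (𝓞 L)⁰ L) :
        Submodule (𝓞 L) L).restrictScalars (𝓞 K) := by
    rw [Submodule.restrictScalars_mem, FractionalIdeal.mem_coe,
      FractionalIdeal.coeIdeal_span_singleton, FractionalIdeal.spanSingleton_inv,
      FractionalIdeal.mem_spanSingleton]
    refine ⟨η, ?_⟩
    rw [Algebra.smul_def, Algebra.smul_def, mul_comm, ← IsScalarTower.algebraMap_apply,
      IsScalarTower.algebraMap_apply (𝓞 K) K L, ← map_inv₀]
  obtain ⟨t, ht⟩ := Submodule.mem_one.mp (hle (Submodule.mem_map_of_mem hmem))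
  refine ⟨t, ?_⟩
  rw [LinearMap.restrictScalars_apply, map_smul, smul_eq_mul] at ht
  have : (a : K) ≠ 0 := by simpa using ha
  change _ = _ * algebraMap _ _ t
  rw [ht]
  field_simp

theorem abs_norm_le_abs_norm_of_forall_norm_embedding_le {F : Type*} [Field F] [NumberField F]
    {u v : F} (h : ∀ σ : F →+* ℂ, ‖σ u‖ ≤ ‖σ v‖) :
    |(Algebra.norm ℚ u : ℝ)| ≤ |(Algebra.norm ℚ v : ℝ)| := by
  simp only [← Complex.norm_ratCast, ← eq_ratCast (algebraMap ℚ ℂ),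
    Algebra.norm_eq_prod_embeddings ℚ ℂ, norm_prod]
  exact Finset.prod_le_prod (fun _ _ => norm_nonneg _) fun σ _ => h σ

section CMExtension

variable {K L : Type*} [Field K] [Field L] [NumberField K] [NumberField L] [Algebra K L]

theorem exists_extension_norm_trace_eq (hL : IsTotallyImaginary L)
    (hdeg : Module.finrank K L = 2) (σ : K →+* ℂ) (hσ : ComplexEmbedding.IsReal σ) :
    ∃ τ : L →+* ℂ, ∀ y : L, σ (Algebra.norm K y) = τ y * conj (τ y) ∧
      σ (Algebra.trace K L y) = τ y + conj (τ y) := by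
  classical
  let : Algebra K ℂ := σ.toAlgebra
  have hcard : Fintype.card (L →ₐ[K] ℂ) = 2 := by rw [AlgHom.card]; exact hdeg
  obtain ⟨τ⟩ : Nonempty (L →ₐ[K] ℂ) := Fintype.card_pos_iff.mp (by omega)
  let τbar : L →ₐ[K] ℂ :=
    { (starRingEnd ℂ).comp τ.toRingHom with
      commutes' := fun k => by
        change conj (τ (algebraMap K L k)) = σ k
        rw [AlgHom.commutes]
        exact RingHom.congr_fun (ComplexEmbedding.isReal_iff.mp hσ) k }
  have hne : τ ≠ τbar := fun h => hL τ.toRingHom <| ComplexEmbedding.isReal_iff.mpr <|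
    RingHom.ext fun z => (congrArg (· z) h).symm
  have huniv : (Finset.univ : Finset (L →ₐ[K] ℂ)) = {τ, τbar} :=
    (Finset.eq_univ_of_card _ (by rw [Finset.card_pair hne, hcard])).symm
  refine ⟨τ, fun y => ⟨?_, ?_⟩⟩
  · rw [← RingHom.algebraMap_toAlgebra σ, Algebra.norm_eq_prod_embeddings, huniv,
      Finset.prod_pair hne]
    rfl
  · rw [← RingHom.algebraMap_toAlgebra σ, trace_eq_sum_embeddings, huniv, Finset.sum_pair hne]
    rfl

theorem norm_embedding_half_trace_sq_le (hK : _root_.IsTotallyReal K)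
    (hL : IsTotallyImaginary L) (hdeg : Module.finrank K L = 2) (x : L) (σ : K →+* ℂ) :
    ‖σ ((Algebra.trace K L x / 2) ^ 2)‖ ≤ ‖σ (Algebra.norm K x)‖ := by
  obtain ⟨τ, hτ⟩ := exists_extension_norm_trace_eq hL hdeg σ (hK σ)
  obtain ⟨hnorm, htrace⟩ := hτ x
  have hhalf : σ (Algebra.trace K L x) / 2 = ((τ x).re : ℂ) := by
    rw [htrace, Complex.add_conj]; push_cast; ring
  rw [map_pow, map_div₀, map_ofNat, hhalf, hnorm, Complex.mul_conj, norm_pow, Complex.norm_real,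
    Complex.norm_real, Real.norm_eq_abs, Real.norm_eq_abs, sq_abs,
    abs_of_nonneg (Complex.normSq_nonneg _), Complex.normSq_apply]
  nlinarith [mul_self_nonneg (τ x).im]

theorem sq_abs_norm_half_trace_le (hK : _root_.IsTotallyReal K)
    (hL : IsTotallyImaginary L) (hdeg : Module.finrank K L = 2) (x : L) :
    |(Algebra.norm ℚ (Algebra.trace K L x / 2) : ℝ)| ^ 2 ≤ |(Algebra.norm ℚ x : ℝ)| := by
  have := abs_norm_le_abs_norm_of_forall_norm_embedding_le
    (norm_embedding_half_trace_sq_le hK hL hdeg x)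
  rwa [map_pow, Rat.cast_pow, abs_pow, Algebra.norm_norm] at this

theorem sq_eucMinAt_le_eucMinAt_algebraMap (hK : _root_.IsTotallyReal K)
    (hL : IsTotallyImaginary L) (hdeg : Module.finrank K L = 2)
    (hdiff : Ideal.span {(2 : 𝓞 L)} ∣ differentIdeal (𝓞 K) (𝓞 L)) (ξ : K) :
    eucMinAt ξ ^ 2 ≤ eucMinAt (algebraMap K L ξ) := by
  refine le_ciInf fun η => ?_
  obtain ⟨t, ht⟩ := exists_trace_eq_mul_of_span_dvd_differentIdeal two_ne_zero
    (by rwa [map_ofNat]) η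
  have hhalf : Algebra.trace K L (algebraMap K L ξ - η) / 2 = ξ - t := by
    rw [map_sub, ht, Algebra.trace_algebraMap, hdeg, show ((2 : 𝓞 K) : K) = 2 from rfl]
    ring
  calc eucMinAt ξ ^ 2 ≤ |(Algebra.norm ℚ (ξ - t) : ℝ)| ^ 2 :=
        pow_le_pow_left₀ (eucMinAt_nonneg ξ) (eucMinAt_le ξ t) 2
    _ ≤ |(Algebra.norm ℚ (algebraMap K L ξ - η) : ℝ)| := by
        simpa only [hhalf] using sq_abs_norm_half_trace_le hK hL hdeg (algebraMap K L ξ - η)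

end CMExtension

theorem cm_field_eucMin_ge_sq
    {K L : Type*} [Field K] [Field L] [NumberField K] [NumberField L] [Algebra K L]
    (hK : _root_.IsTotallyReal K) (hL : _root_.IsTotallyImaginary L)
    (hdeg : Module.finrank K L = 2)
    (hdiff : Ideal.span {(2 : 𝓞 L)} ∣ differentIdeal (𝓞 K) (𝓞 L)) :
    eucMin L ≥ (eucMin K) ^ 2 := by
  have hsqrt : eucMin K ≤ √(eucMin L) := eucMin_le (Real.sqrt_nonneg _) fun ξ =>
    Real.le_sqrt_of_sq_le <|
      (sq_eucMinAt_le_eucMinAt_algebraMap hK hL hdeg hdiff ξ).trans (eucMinAt_le_eucMin _)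
  exact (Real.le_sqrt (eucMin_nonneg K) (eucMin_nonneg L)).mp hsqrt
end

section
/- If the ring of integers of an imaginary bicyclic quartic field K = ℚ(√m, √n) is norm-Euclidean and contains an element of norm 2, then each of the two imaginary quadratic subfields of K contains an algebraic integer of norm 2; consequently each imaginary quadratic subfield is ℚ(√−1), ℚ(√−2), or ℚ(√−7). -/
/-! If `x ∈ 𝓞 K` has norm `±2`, its relative norm `α` to the imaginary quadratic subfield
`ℚ(√d)` (realised as the field `QuadraticAlgebra ℚ d 0`, mapped into `K` by `√d ↦ s`) is an
algebraic integer with `N(α) = ±2`; since `d < 0` the norm form `a² - d b²` is nonnegative, so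
`N(α) = 2`. The trace and norm of `α = a + b√d` are rational integers, so `2a ∈ ℤ` and, as `d` is
squarefree, `2b ∈ ℤ`. Then `(2a)² - d (2b)² = 8`, which forces `d ∈ {-1, -2, -7}`. -/

open NumberField

theorem exists_isIntegral_norm_eq_of_algHom {k F K : Type*} [Field k] [Field F] [Field K]
    [Algebra k F] [Algebra k K] (φ : F →ₐ[k] K) {x : K} (hx : IsIntegral ℤ x) :
    ∃ y : F, IsIntegral ℤ y ∧ Algebra.norm k y = Algebra.norm k x := by
  let _ : Algebra F K := φ.toRingHom.toAlgebra
  have : IsScalarTower k F K := .of_algebraMap_eq fun c ↦ (φ.commutes c).symm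
  exact ⟨Algebra.norm F x, Algebra.isIntegral_norm F hx, Algebra.norm_norm⟩

theorem Squarefree.den_eq_one_of_intCast_eq_mul_sq {d : ℤ} (hd : Squarefree d) {q : ℚ} {c : ℤ}
    (h : (c : ℚ) = d * q ^ 2) : q.den = 1 := by
  have hcross : c * (q.den : ℤ) ^ 2 = d * q.num ^ 2 := by
    have : (c : ℚ) * (q.den : ℚ) ^ 2 = d * (q * q.den) ^ 2 := by rw [h]; ring
    exact_mod_cast Rat.mul_den_eq_num q ▸ this
  have hcop : IsCoprime (q.den : ℤ) q.num := by
    rw [Int.isCoprime_iff_gcd_eq_one, Int.gcd_comm]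
    exact q.reduced
  have hdvd : (q.den : ℤ) ^ 2 ∣ d :=
    (hcop.pow (m := 2) (n := 2)).dvd_of_dvd_mul_right ⟨c, by rw [← hcross]; ring⟩
  have := Int.isUnit_iff.1 (hd _ (by rwa [← sq]))
  omega

namespace QuadraticAlgebra

theorem algebra_norm_eq_norm {R : Type*} [CommRing R] {a b : R} (z : QuadraticAlgebra R a b) :
    Algebra.norm R z = z.norm :=
  det_toLinearMap_eq_norm z

theorem norm_nonneg_of_nonpos {R : Type*} [CommRing R] [LinearOrder R] [IsStrictOrderedRing R]
    {a : R} (ha : a ≤ 0) (z : QuadraticAlgebra R a 0) : 0 ≤ z.norm := by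
  rw [norm_def]
  nlinarith [mul_self_nonneg z.re, mul_nonneg (neg_nonneg.2 ha) (mul_self_nonneg z.im)]

theorem isIntegral_star {R : Type*} [CommRing R] {a b : R} {z : QuadraticAlgebra R a b}
    (hz : IsIntegral ℤ z) : IsIntegral ℤ (star z) :=
  hz.map (starRingEnd _).toIntAlgHom

theorem exists_intCast_eq_trace_and_norm {a b : ℚ} {z : QuadraticAlgebra ℚ a b}
    (hz : IsIntegral ℤ z) : (∃ A : ℤ, (A : ℚ) = trace z) ∧ ∃ N : ℤ, (N : ℚ) = norm z := by
  have hinj := (algebraMap ℚ (QuadraticAlgebra ℚ a b)).injective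
  refine ⟨IsIntegrallyClosed.isIntegral_iff.1 ?_, IsIntegrallyClosed.isIntegral_iff.1 ?_⟩
  · rw [← isIntegral_algebraMap_iff hinj, algebraMap_trace_eq_add_star]
    exact hz.add (isIntegral_star hz)
  · rw [← isIntegral_algebraMap_iff hinj, algebraMap_norm_eq_mul_star]
    exact hz.mul (isIntegral_star hz)

theorem exists_intCast_eq_two_mul_re_and_im {d : ℤ} (hd : Squarefree d)
    {z : QuadraticAlgebra ℚ d 0} (hz : IsIntegral ℤ z) :
    ∃ A B : ℤ, (A : ℚ) = 2 * z.re ∧ (B : ℚ) = 2 * z.im := by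
  obtain ⟨⟨A, hA⟩, ⟨N, hN⟩⟩ := exists_intCast_eq_trace_and_norm hz
  rw [trace_def, zero_mul, add_zero] at hA
  rw [norm_def] at hN
  have hden : (2 * z.im).den = 1 :=
    hd.den_eq_one_of_intCast_eq_mul_sq (c := A ^ 2 - 4 * N) (by push_cast; rw [hA, hN]; ring)
  exact ⟨A, _, hA, Rat.coe_int_num_of_den_eq_one hden⟩

end QuadraticAlgebra

theorem Int.eq_neg_one_or_neg_two_or_neg_seven_of_sq_sub_mul_sq_eq_eight {d A B : ℤ}
    (hd : Squarefree d) (hneg : d < 0) (h : A ^ 2 - d * B ^ 2 = 8) :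
    d = -1 ∨ d = -2 ∨ d = -7 := by
  have h4 : ¬ 4 ∣ d := fun h4 ↦ by simpa [Int.isUnit_iff] using hd 2 h4
  have hA : A ^ 2 ≤ 8 := by nlinarith [sq_nonneg B]
  have hB : B ^ 2 ≤ 8 := by nlinarith [sq_nonneg A]
  have hB0 : B ≠ 0 := by
    rintro rfl
    have : A ≤ 2 := by nlinarith
    have : -2 ≤ A := by nlinarith
    interval_cases A <;> omega
  have hd8 : -8 ≤ d := by nlinarith [sq_nonneg A, (sq_pos_of_ne_zero hB0)]
  have hA_le : A ≤ 2 := by nlinarith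
  have hA_ge : -2 ≤ A := by nlinarith
  have hB_le : B ≤ 2 := by nlinarith
  have hB_ge : -2 ≤ B := by nlinarith
  interval_cases d <;> interval_cases A <;> interval_cases B <;> omega

open QuadraticAlgebra in
theorem normEuclidean_with_norm_two_element_general
    {K : Type*} [Field K] [NumberField K]
    (hx : ∃ x : 𝓞 K, |Algebra.norm ℚ ((x : K))| = 2) :
    ∀ d : ℤ, Squarefree d → d < 0 → ∀ s : K, s ^ 2 = (d : K) →
      (∃ a b : ℚ, IsIntegral ℤ ((a : K) + b * s) ∧ a ^ 2 - d * b ^ 2 = 2) ∧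
      (d = -1 ∨ d = -2 ∨ d = -7) := by
  intro d hd hneg s hs
  obtain ⟨x, hx⟩ := hx
  have hdq : (d : ℚ) < 0 := Int.cast_lt_zero.2 hneg
  have : Fact (∀ r : ℚ, r ^ 2 ≠ d + 0 * r) := ⟨fun r h ↦ by nlinarith [sq_nonneg r]⟩
  let φ : QuadraticAlgebra ℚ d 0 →ₐ[ℚ] K := lift ⟨s, by simp [← sq, hs]⟩
  obtain ⟨z, hz, hnorm⟩ := exists_isIntegral_norm_eq_of_algHom φ x.isIntegral_coe
  have hφ : φ z = z.re + z.im * s := by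
    show z.re • (1 : K) + z.im • s = _
    simp [Algebra.smul_def]
  have hz2 : z.norm = 2 := by
    -- the field structure's `ℚ`-algebra instance agrees with `lift`'s only up to unfolding
    have hN : Algebra.norm ℚ z = z.norm := algebra_norm_eq_norm z
    rwa [← hnorm, hN, abs_of_nonneg (norm_nonneg_of_nonpos hdq.le z)] at hx
  obtain ⟨A, B, hA, hB⟩ := exists_intCast_eq_two_mul_re_and_im hd hz
  have h8 : A ^ 2 - d * B ^ 2 = 8 := by
    have h : ((A ^ 2 - d * B ^ 2 : ℤ) : ℚ) = 4 * z.norm := by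
      push_cast; rw [hA, hB, norm_def]; ring
    exact_mod_cast hz2 ▸ h
  exact ⟨⟨z.re, z.im, hφ ▸ hz.map φ, by rw [← hz2, norm_def]; ring⟩,
    Int.eq_neg_one_or_neg_two_or_neg_seven_of_sq_sub_mul_sq_eq_eight hd hneg h8⟩

/-- If a norm-Euclidean imaginary bicyclic quartic field `K = ℚ(√m, √n)`
contains an element of norm 2, then each imaginary quadratic subfield
`ℚ(√d) ⊆ K` (d < 0 squarefree) contains an algebraic integer of norm 2,
and hence is one of `ℚ(√-1)`, `ℚ(√-2)`, `ℚ(√-7)`. -/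
theorem normEuclidean_with_norm_two_element
    {K : Type*} [Field K] [NumberField K]
    (m n : ℤ) (hmsf : Squarefree m) (hnsf : Squarefree n) (hmn : m ≠ n)
    (him : IsTotallyImaginary K) (h4 : Module.finrank ℚ K = 4)
    (sm sn : K) (hsm : sm ^ 2 = (m : K)) (hsn : sn ^ 2 = (n : K))
    (hE : IsNormEuclidean K)
    (hx : ∃ x : 𝓞 K, |Algebra.norm ℚ ((x : K))| = 2) :
    ∀ d : ℤ, Squarefree d → d < 0 → ∀ s : K, s ^ 2 = (d : K) →
      (∃ a b : ℚ, IsIntegral ℤ ((a : K) + b * s) ∧ a ^ 2 - d * b ^ 2 = 2) ∧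
      (d = -1 ∨ d = -2 ∨ d = -7) :=
  normEuclidean_with_norm_two_element_general hx
end

section
/- The ring of integers of K = ℚ(i, √13) is not norm-Euclidean. -/
/-!
Let `λ = (3 + 2i + √13) / 2`, an element of norm 13. If `K` were norm-Euclidean, some algebraic
integer `η` would satisfy `|N(2/λ - η)| < 1`, so `β = 2 - λη` would have `|N β| < 13`.

Comparing traces and relative norms to `ℚ(i)` with their conjugates shows that the ring of integers
is `ℤ[i, θ]`, `θ = (1 + √13) / 2`. Hence the relative norm of `β` to `ℚ(i)` is some `X + Yi ∈ ℤ[i]`,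
with `N β = X² + Y²`, and `X + Yi ≡ 4` modulo the prime `3 + 2i` below `λ`. The only such values of
`X² + Y²` below 13 are 2 and 5. But `4 N β` is also of the form `M² - 13 V²` (the norm through
`ℚ(√13)`), and 2 and 5 are not squares modulo 13.
-/

open NumberField

theorem Prime.dvd_and_dvd_of_dvd_mul_of_dvd_sq_sub {R : Type*} [CommRing R] {p a b : R}
    (hp : Prime p) (hab : p ∣ a * b) (h : p ∣ a ^ 2 - b ^ 2) : p ∣ a ∧ p ∣ b := by
  rcases hp.dvd_or_dvd hab with ha | hb
  · refine ⟨ha, hp.dvd_of_dvd_pow (n := 2) ?_⟩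
    simpa using dvd_sub (dvd_pow ha two_ne_zero) h
  · refine ⟨hp.dvd_of_dvd_pow (n := 2) ?_, hb⟩
    simpa using dvd_add (dvd_pow hb two_ne_zero) h

theorem Int.two_dvd_of_four_dvd_sq_add_sq {x y : ℤ} (h : 4 ∣ x ^ 2 + y ^ 2) : 2 ∣ x ∧ 2 ∣ y := by
  rcases Int.even_or_odd' x with ⟨k, rfl | rfl⟩ <;> rcases Int.even_or_odd' y with ⟨l, rfl | rfl⟩
  all_goals ring_nf at h
  all_goals omega

theorem isIntegral_of_sq_eq {A : Type*} [Ring A] {x : A} (m n : ℤ) (h : x ^ 2 = m * x + n) :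
    IsIntegral ℤ x := by
  refine ⟨Polynomial.X ^ 2 - Polynomial.C m * Polynomial.X - Polynomial.C n, by monicity!, ?_⟩
  rw [← Polynomial.aeval_def]
  simp [h]

theorem isIntegral_of_sq_eq_neg_one {A : Type*} [Ring A] {x : A} (h : x ^ 2 = -1) :
    IsIntegral ℤ x :=
  isIntegral_of_sq_eq 0 (-1) (by simp [h])

namespace Biquadratic

variable {K L : Type*} [Field K] [Field L] {i s : K} {δ : ℚ}

def elem (i s : K) (a b c d : ℚ) : K := a + b * i + c * s + d * (i * s)

theorem elem_mul_i (hi : i ^ 2 = -1) (a b c d : ℚ) :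
    elem i s a b c d * i = elem i s (-b) a (-d) c := by
  simp only [elem]; push_cast
  linear_combination (b + d * s) * hi

variable [CharZero K] [CharZero L]

theorem elem_mul_s (hs : s ^ 2 = δ) (a b c d : ℚ) :
    elem i s a b c d * s = elem i s (δ * c) (δ * d) a b := by
  simp only [elem]; push_cast
  linear_combination (c + d * i) * hs

theorem elem_mul_i_mul_s (hi : i ^ 2 = -1) (hs : s ^ 2 = δ) (a b c d : ℚ) :
    elem i s a b c d * (i * s) = elem i s (-δ * d) (δ * c) (-b) a := by
  rw [← mul_assoc, elem_mul_i hi, elem_mul_s hs]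
  congr 1; ring

theorem sum_smul_eq_elem (i s : K) (v : Fin 4 → ℚ) :
    ∑ j, v j • ![1, i, s, i * s] j = elem i s (v 0) (v 1) (v 2) (v 3) := by
  simp [Fin.sum_univ_four, elem, Rat.smul_def]

theorem map_elem (φ : K →ₐ[ℚ] L) (a b c d : ℚ) :
    φ (elem i s a b c d) = elem (φ i) (φ s) a b c d := by
  simp [elem]

theorem elem_add (a b c d a' b' c' d' : ℚ) :
    elem i s a b c d + elem i s a' b' c' d' = elem i s (a + a') (b + b') (c + c') (d + d') := by
  simp only [elem]; push_cast; ring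

theorem elem_mul (hi : i ^ 2 = -1) (hs : s ^ 2 = δ) (a b c d a' b' c' d' : ℚ) :
    elem i s a b c d * elem i s a' b' c' d' =
      elem i s (a * a' - b * b' + δ * (c * c' - d * d')) (a * b' + a' * b + δ * (c * d' + c' * d))
        (a * c' + a' * c - (b * d' + b' * d)) (a * d' + a' * d + b * c' + b' * c) := by
  simp only [elem]; push_cast
  linear_combination ((b : K) * b' + (b * d' + d * b') * s + d * d' * s ^ 2) * hi
    + ((c : K) * c' + (c * d' + d * c') * i - d * d') * hs

theorem eq_zero_of_add_mul_eq_zero (hi : i ^ 2 = -1) {x y : ℚ} (h : (x : K) + y * i = 0) :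
    x = 0 ∧ y = 0 := by
  have hK : ((x ^ 2 + y ^ 2 : ℚ) : K) = 0 := by
    push_cast; linear_combination (x - y * i) * h + y ^ 2 * hi
  have hQ : x ^ 2 + y ^ 2 = 0 := by exact_mod_cast hK
  constructor <;> nlinarith [sq_nonneg x, sq_nonneg y]

theorem ne_add_mul (hi : i ^ 2 = -1) (hs : s ^ 2 = δ) (hδ : ¬IsSquare δ) (hδ' : ¬IsSquare (-δ))
    (x y : ℚ) : s ≠ x + y * i := by
  intro h
  obtain ⟨hre, him⟩ : x ^ 2 - y ^ 2 - δ = 0 ∧ 2 * x * y = 0 := by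
    apply eq_zero_of_add_mul_eq_zero hi
    push_cast
    linear_combination -(x + y * i + s) * h - y ^ 2 * hi + hs
  rcases mul_eq_zero.mp him with hx | hy
  · exact hδ' ⟨y, by rw [show x = 0 by linarith] at hre; linarith⟩
  · exact hδ ⟨x, by rw [hy] at hre; linarith⟩

theorem elem_eq_zero (hi : i ^ 2 = -1) (hs : s ^ 2 = δ) (hδ : ¬IsSquare δ) (hδ' : ¬IsSquare (-δ))
    {a b c d : ℚ} (h : elem i s a b c d = 0) : a = 0 ∧ b = 0 ∧ c = 0 ∧ d = 0 := by
  have hcd : c = 0 ∧ d = 0 := by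
    by_contra hne
    have hn : c ^ 2 + d ^ 2 ≠ 0 := by
      contrapose! hne
      constructor <;> nlinarith [sq_nonneg c, sq_nonneg d]
    -- otherwise `s = -(a + b i) / (c + d i)` would lie in `ℚ(i)`
    apply ne_add_mul hi hs hδ hδ' (-(a * c + b * d) / (c ^ 2 + d ^ 2))
      (-(b * c - a * d) / (c ^ 2 + d ^ 2))
    have hnK : ((c ^ 2 + d ^ 2 : ℚ) : K) ≠ 0 := by exact_mod_cast hn
    push_cast at hnK ⊢
    field_simp
    simp only [elem] at h
    linear_combination (c - d * i) * h + (b * d + d ^ 2 * s) * hi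
  obtain ⟨rfl, rfl⟩ := hcd
  obtain ⟨ha, hb⟩ := eq_zero_of_add_mul_eq_zero hi (x := a) (y := b) (by simpa [elem] using h)
  exact ⟨ha, hb, rfl, rfl⟩

theorem linearIndependent (hi : i ^ 2 = -1) (hs : s ^ 2 = δ) (hδ : ¬IsSquare δ)
    (hδ' : ¬IsSquare (-δ)) : LinearIndependent ℚ ![1, i, s, i * s] := by
  rw [Fintype.linearIndependent_iff]
  intro g hg
  rw [sum_smul_eq_elem] at hg
  obtain ⟨h0, h1, h2, h3⟩ := elem_eq_zero hi hs hδ hδ' hg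
  intro j
  fin_cases j <;> assumption

theorem exists_basis (hi : i ^ 2 = -1) (hs : s ^ 2 = δ) (hδ : ¬IsSquare δ) (hδ' : ¬IsSquare (-δ))
    (h4 : Module.finrank ℚ K = 4) : ∃ B : Module.Basis (Fin 4) ℚ K, ⇑B = ![1, i, s, i * s] :=
  ⟨basisOfLinearIndependentOfCardEqFinrank (linearIndependent hi hs hδ hδ') (by simp [h4]),
    coe_basisOfLinearIndependentOfCardEqFinrank _ _⟩

section Basis

variable (B : Module.Basis (Fin 4) ℚ K)

theorem equivFun_elem (hB : ⇑B = ![1, i, s, i * s]) (a b c d : ℚ) :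
    B.equivFun (elem i s a b c d) = ![a, b, c, d] := by
  apply B.equivFun.symm.injective
  rw [LinearEquiv.symm_apply_apply, B.equivFun_symm_apply, hB, sum_smul_eq_elem]
  rfl

theorem exists_eq_elem (hB : ⇑B = ![1, i, s, i * s]) (x : K) :
    ∃ a b c d : ℚ, x = elem i s a b c d :=
  ⟨_, _, _, _, by
    rw [← sum_smul_eq_elem, ← hB, ← B.equivFun_symm_apply, B.equivFun.symm_apply_apply]⟩

theorem leftMulMatrix_elem (hi : i ^ 2 = -1) (hs : s ^ 2 = δ) (hB : ⇑B = ![1, i, s, i * s])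
    (a b c d : ℚ) :
    Algebra.leftMulMatrix B (elem i s a b c d) =
      !![a, -b, δ * c, -δ * d; b, a, δ * d, δ * c; c, -d, a, -b; d, c, b, a] := by
  ext j k
  rw [Algebra.leftMulMatrix_eq_repr_mul, ← B.equivFun_apply, hB]
  fin_cases k <;>
    simp only [Fin.zero_eta, Fin.mk_one, Fin.reduceFinMk, Matrix.cons_val, mul_one, elem_mul_i hi,
      elem_mul_s hs, elem_mul_i_mul_s hi hs, equivFun_elem B hB] <;>
    fin_cases j <;> rfl

theorem norm_elem (hi : i ^ 2 = -1) (hs : s ^ 2 = δ) (hB : ⇑B = ![1, i, s, i * s])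
    (a b c d : ℚ) :
    Algebra.norm ℚ (elem i s a b c d) =
      (a ^ 2 - b ^ 2 - δ * c ^ 2 + δ * d ^ 2) ^ 2 + (2 * a * b - 2 * δ * c * d) ^ 2 := by
  rw [Algebra.norm_eq_matrix_det B, leftMulMatrix_elem B hi hs hB, Matrix.det_succ_row_zero,
    Fin.sum_univ_four]
  simp [Matrix.det_fin_three, Matrix.submatrix, Fin.succAbove, Fin.lt_def]
  ring

theorem exists_algHom (hi : i ^ 2 = -1) (hs : s ^ 2 = δ) (hB : ⇑B = ![1, i, s, i * s])
    {i' s' : L} (hi' : i' ^ 2 = -1) (hs' : s' ^ 2 = δ) : ∃ φ : K →ₐ[ℚ] L, φ i = i' ∧ φ s = s' := by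
  set f := B.constr ℚ ![1, i', s', i' * s']
  have hf : ∀ a b c d, f (elem i s a b c d) = elem i' s' a b c d := by
    intro a b c d
    rw [Module.Basis.constr_apply_fintype, equivFun_elem B hB]
    exact sum_smul_eq_elem i' s' _
  have hmul : ∀ x y, f (x * y) = f x * f y := by
    intro x y
    obtain ⟨a, b, c, d, rfl⟩ := exists_eq_elem B hB x
    obtain ⟨a', b', c', d', rfl⟩ := exists_eq_elem B hB y
    rw [elem_mul hi hs, hf, hf, hf, elem_mul hi' hs']
  refine ⟨AlgHom.ofLinearMap f (by simpa [elem] using hf 1 0 0 0) hmul, ?_, ?_⟩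
  · simpa [elem] using hf 0 1 0 0
  · simpa [elem] using hf 0 0 1 0

end Basis

theorem exists_int_eq_of_isIntegral {x : ℚ} (h : IsIntegral ℤ (x : K)) : ∃ n : ℤ, x = n := by
  rw [← eq_ratCast (algebraMap ℚ K), isIntegral_algebraMap_iff (algebraMap ℚ K).injective,
    IsIntegrallyClosed.isIntegral_iff] at h
  obtain ⟨n, hn⟩ := h
  exact ⟨n, by simp [← hn]⟩

theorem exists_int_eq_of_isIntegral_add_mul (hi : i ^ 2 = -1) (τ : K →ₐ[ℚ] K) (hτ : τ i = -i)
    {x y : ℚ} (h : IsIntegral ℤ ((x : K) + y * i)) : ∃ m n : ℤ, x = m ∧ y = n := by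
  have hτh : IsIntegral ℤ ((x : K) - y * i) := by
    simpa [hτ, sub_eq_add_neg] using h.map τ
  obtain ⟨P, hP⟩ : ∃ P : ℤ, 2 * x = P := by
    refine exists_int_eq_of_isIntegral (K := K) ?_
    rw [show ((2 * x : ℚ) : K) = (x + y * i) + (x - y * i) by push_cast; ring]
    exact h.add hτh
  obtain ⟨Q, hQ⟩ : ∃ Q : ℤ, 2 * y = Q := by
    refine exists_int_eq_of_isIntegral (K := K) ?_
    rw [show ((2 * y : ℚ) : K) = ((x + y * i) - (x - y * i)) * -i by
      push_cast; linear_combination (2 * y : K) * hi]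
    exact (h.sub hτh).mul (isIntegral_of_sq_eq_neg_one hi).neg
  obtain ⟨W, hW⟩ : ∃ W : ℤ, x ^ 2 + y ^ 2 = W := by
    refine exists_int_eq_of_isIntegral (K := K) ?_
    rw [show ((x ^ 2 + y ^ 2 : ℚ) : K) = (x + y * i) * (x - y * i) by
      push_cast; linear_combination (y ^ 2 : K) * hi]
    exact h.mul hτh
  have hPQ : P ^ 2 + Q ^ 2 = 4 * W := by
    have : ((P ^ 2 + Q ^ 2 : ℤ) : ℚ) = 4 * W := by push_cast; rw [← hP, ← hQ, ← hW]; ring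
    exact_mod_cast this
  obtain ⟨⟨m, rfl⟩, ⟨n, rfl⟩⟩ := Int.two_dvd_of_four_dvd_sq_add_sq ⟨W, hPQ⟩
  push_cast at hP hQ
  exact ⟨m, n, by linarith, by linarith⟩

theorem exists_int_two_mul_of_isIntegral (hi : i ^ 2 = -1) {σ τ : K →ₐ[ℚ] K} (hσi : σ i = i)
    (hσs : σ s = -s) (hτ : τ i = -i) {p q r t : ℚ} (h : IsIntegral ℤ (elem i s p q r t)) :
    ∃ P Q : ℤ, 2 * p = P ∧ 2 * q = Q := by
  refine exists_int_eq_of_isIntegral_add_mul hi τ hτ ?_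
  rw [show ((2 * p : ℚ) : K) + (2 * q : ℚ) * i = elem i s p q r t + σ (elem i s p q r t) by
    rw [map_elem, hσi, hσs]; simp only [elem]; push_cast; ring]
  exact h.add (h.map σ)

theorem exists_int_relNorm_of_isIntegral (hi : i ^ 2 = -1) (hs : s ^ 2 = δ) {σ τ : K →ₐ[ℚ] K}
    (hσi : σ i = i) (hσs : σ s = -s) (hτ : τ i = -i) {p q r t : ℚ}
    (h : IsIntegral ℤ (elem i s p q r t)) :
    ∃ X Y : ℤ, p ^ 2 - q ^ 2 - δ * r ^ 2 + δ * t ^ 2 = X ∧ 2 * p * q - 2 * δ * r * t = Y := by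
  refine exists_int_eq_of_isIntegral_add_mul hi τ hτ ?_
  rw [show ((p ^ 2 - q ^ 2 - δ * r ^ 2 + δ * t ^ 2 : ℚ) : K) + (2 * p * q - 2 * δ * r * t : ℚ) * i
      = elem i s p q r t * σ (elem i s p q r t) by
    rw [map_elem, hσi, hσs]; simp only [elem]; push_cast
    linear_combination (δ * t ^ 2 - (q : K) ^ 2) * hi
      + (r ^ 2 + 2 * r * t * i + t ^ 2 * i ^ 2) * hs]
  exact h.mul (h.map σ)

theorem exists_int_of_relNorm_thirteen {p q r t : ℚ} {P Q E F X Y : ℤ} (hP : 2 * p = P)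
    (hQ : 2 * q = Q) (hE : p - 13 * r = E) (hF : q - 13 * t = F)
    (hX : p ^ 2 - q ^ 2 - 13 * r ^ 2 + 13 * t ^ 2 = X) (hY : 2 * p * q - 2 * 13 * r * t = Y) :
    ∃ m n k l : ℤ, p = m + k / 2 ∧ q = n + l / 2 ∧ r = k / 2 ∧ t = l / 2 := by
  obtain ⟨R, hR⟩ : ∃ R : ℤ, (R : ℚ) = 26 * r := ⟨P - 2 * E, by push_cast; linarith⟩
  obtain ⟨T, hT⟩ : ∃ T : ℤ, (T : ℚ) = 26 * t := ⟨Q - 2 * F, by push_cast; linarith⟩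
  have hXR : 52 * X = 13 * (P ^ 2 - Q ^ 2) - (R ^ 2 - T ^ 2) := by
    have : ((52 * X : ℤ) : ℚ) = ((13 * (P ^ 2 - Q ^ 2) - (R ^ 2 - T ^ 2) : ℤ) : ℚ) := by
      push_cast; rw [hR, hT, ← hP, ← hQ, ← hX]; ring
    exact_mod_cast this
  have hYR : 26 * Y = 13 * (P * Q) - R * T := by
    have : ((26 * Y : ℤ) : ℚ) = ((13 * (P * Q) - R * T : ℤ) : ℚ) := by
      push_cast; rw [hR, hT, ← hP, ← hQ, ← hY]; ring
    exact_mod_cast this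
  obtain ⟨⟨k, rfl⟩, ⟨l, rfl⟩⟩ :=
    (show Prime (13 : ℤ) by norm_num).dvd_and_dvd_of_dvd_mul_of_dvd_sq_sub (a := R) (b := T)
      ⟨P * Q - 2 * Y, by linarith⟩ ⟨P ^ 2 - Q ^ 2 - 4 * X, by linarith⟩
  push_cast at hR hT
  exact ⟨E + 6 * k, F + 6 * l, k, l, by push_cast; linarith, by push_cast; linarith, by linarith,
    by linarith⟩

theorem exists_int_of_isIntegral (hi : i ^ 2 = -1) (hs : s ^ 2 = ((13 : ℚ) : K))
    (B : Module.Basis (Fin 4) ℚ K) (hB : ⇑B = ![1, i, s, i * s]) {p q r t : ℚ}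
    (h : IsIntegral ℤ (elem i s p q r t)) :
    ∃ m n k l : ℤ, p = m + k / 2 ∧ q = n + l / 2 ∧ r = k / 2 ∧ t = l / 2 := by
  obtain ⟨σ, hσi, hσs⟩ := exists_algHom B hi hs hB hi (s' := -s) (by rw [neg_sq, hs])
  obtain ⟨τ, hτi, -⟩ := exists_algHom B hi hs hB (i' := -i) (by rw [neg_sq, hi]) hs
  -- `θ = (1 + √13) / 2` is a root of `X ^ 2 - X - 3`
  have hθ : IsIntegral ℤ (elem i s (1 / 2) 0 (1 / 2) 0) :=
    isIntegral_of_sq_eq 1 3 (by simp only [elem]; push_cast; linear_combination (1 / 4 : K) * hs)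
  have hiθ : IsIntegral ℤ (elem i s 0 (1 / 2) 0 (1 / 2)) := by
    rw [show elem i s 0 (1 / 2) 0 (1 / 2) = i * elem i s (1 / 2) 0 (1 / 2) 0 by
      simp only [elem]; push_cast; ring]
    exact (isIntegral_of_sq_eq_neg_one hi).mul hθ
  obtain ⟨P, Q, hP, hQ⟩ := exists_int_two_mul_of_isIntegral hi hσi hσs hτi h
  obtain ⟨X, Y, hX, hY⟩ := exists_int_relNorm_of_isIntegral hi hs hσi hσs hτi h
  -- adding `θ` (resp. `iθ`) shifts the real part of the relative norm by `p - 13 r - 3`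
  -- (resp. by `-(q - 13 t) + 3`)
  obtain ⟨X₁, -, hX₁, -⟩ := exists_int_relNorm_of_isIntegral hi hs hσi hσs hτi
    (by simpa only [elem_add, add_zero] using h.add hθ)
  obtain ⟨X₂, -, hX₂, -⟩ := exists_int_relNorm_of_isIntegral hi hs hσi hσs hτi
    (by simpa only [elem_add, add_zero] using h.add hiθ)
  exact exists_int_of_relNorm_thirteen hP hQ (E := X₁ - X + 3) (F := X - X₂ + 3)
    (by push_cast; linear_combination hX₁ - hX) (by push_cast; linear_combination hX - hX₂) hX hY

theorem exists_norm_two_sub_mul_eq (hi : i ^ 2 = -1) (hs : s ^ 2 = ((13 : ℚ) : K))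
    (B : Module.Basis (Fin 4) ℚ K) (hB : ⇑B = ![1, i, s, i * s]) {η : K} (hη : IsIntegral ℤ η) :
    ∃ X Y M V : ℤ, Algebra.norm ℚ (2 - elem i s (3 / 2) 1 (1 / 2) 0 * η) = X ^ 2 + Y ^ 2 ∧
      X + 5 * Y ≡ 4 [ZMOD 13] ∧ 4 * (X ^ 2 + Y ^ 2) = M ^ 2 - 13 * V ^ 2 := by
  obtain ⟨p, q, r, t, rfl⟩ := exists_eq_elem B hB η
  obtain ⟨m, n, k, l, rfl, rfl, rfl, rfl⟩ := exists_int_of_isIntegral hi hs B hB hη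
  -- `2 - λη = (P + Q i) + (R + T i) θ`
  set P : ℤ := 2 - m + n - 3 * k with hP
  set Q : ℤ := -m - n - 3 * l with hQ
  set R : ℤ := -(m + 2 * k - l) with hR
  set T : ℤ := -(n + k + 2 * l) with hT
  have hβ : 2 - elem i s (3 / 2) 1 (1 / 2) 0 * elem i s (m + k / 2) (n + l / 2) (k / 2) (l / 2) =
      elem i s (P + R / 2) (Q + T / 2) (R / 2) (T / 2) := by
    rw [elem_mul hi hs]; simp only [elem, hP, hQ, hR, hT]; push_cast; ring
  -- `X + Y i = u ^ 2 + u v - 3 v ^ 2` is the norm of `u + v θ` to `ℚ(i)`, and `(M + V √13) / 2`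
  -- its norm to `ℚ(√13)`
  refine ⟨P ^ 2 + P * R - Q ^ 2 - Q * T - 3 * R ^ 2 + 3 * T ^ 2,
    2 * P * Q + P * T + Q * R - 6 * R * T,
    2 * P ^ 2 + 2 * P * R + 2 * Q ^ 2 + 2 * Q * T + 7 * R ^ 2 + 7 * T ^ 2,
    2 * P * R + R ^ 2 + 2 * Q * T + T ^ 2, ?_, ?_, by ring⟩
  · rw [hβ, norm_elem B hi hs hB]; push_cast; ring
  -- modulo the prime `λ` above `3 + 2i` we have `i ≡ 5`, `θ ≡ 7` and `β ≡ 2`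
  · refine (ZMod.intCast_eq_intCast_iff _ _ 13).mp ?_
    simp only [hP, hQ, hR, hT]
    push_cast
    ring_nf
    reduce_mod_char

end Biquadratic

theorem Int.thirteen_le_sq_add_sq_of_modEq {X Y M V : ℤ} (hc : X + 5 * Y ≡ 4 [ZMOD 13])
    (hM : 4 * (X ^ 2 + Y ^ 2) = M ^ 2 - 13 * V ^ 2) : 13 ≤ X ^ 2 + Y ^ 2 := by
  by_contra! hlt
  have hXY : X ^ 2 + Y ^ 2 = 2 ∨ X ^ 2 + Y ^ 2 = 5 := by
    have hX₁ : -3 ≤ X := by nlinarith [sq_nonneg Y]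
    have hX₂ : X ≤ 3 := by nlinarith [sq_nonneg Y]
    have hY₁ : -3 ≤ Y := by nlinarith [sq_nonneg X]
    have hY₂ : Y ≤ 3 := by nlinarith [sq_nonneg X]
    unfold Int.ModEq at hc
    interval_cases X <;> interval_cases Y <;> omega
  have hM13 : (M : ZMod 13) ^ 2 = 4 * ((X ^ 2 + Y ^ 2 : ℤ) : ZMod 13) := by
    have := congrArg (Int.cast : ℤ → ZMod 13) hM
    push_cast at this ⊢
    rw [this]
    reduce_mod_char
  rcases hXY with h | h <;> rw [h] at hM13 <;> revert hM13 <;> generalize (M : ZMod 13) = z <;>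
    decide +revert

/-- The field `K = ℚ(i, √13)` is not norm-Euclidean. -/
theorem gaussian_sqrt13_not_normEuclidean
    {K : Type*} [Field K] [NumberField K]
    (i : K) (hi : i ^ 2 = -1) (s : K) (hs : s ^ 2 = 13)
    (h4 : Module.finrank ℚ K = 4) :
    ¬ IsNormEuclidean K := by
  intro hNE
  have hs' : s ^ 2 = ((13 : ℚ) : K) := by rw [hs]; norm_num
  obtain ⟨B, hB⟩ := Biquadratic.exists_basis hi hs' (by norm_num) (by norm_num) h4
  set ℓ := Biquadratic.elem i s (3 / 2) 1 (1 / 2) 0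
  have hℓ : Algebra.norm ℚ ℓ = 13 := by rw [Biquadratic.norm_elem B hi hs' hB]; norm_num
  have hℓ₀ : ℓ ≠ 0 := by rintro h; rw [h, Algebra.norm_zero] at hℓ; norm_num at hℓ
  obtain ⟨η, hη⟩ := hNE (2 * ℓ⁻¹)
  obtain ⟨X, Y, M, V, hN, hc, hM⟩ :=
    Biquadratic.exists_norm_two_sub_mul_eq hi hs' B hB η.isIntegral_coe
  have hN' : Algebra.norm ℚ (2 - ℓ * η) = 13 * Algebra.norm ℚ (2 * ℓ⁻¹ - η) := by
    rw [← hℓ, ← map_mul]; congr 1; field_simp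
  have h13 : (13 : ℚ) ≤ X ^ 2 + Y ^ 2 := by
    exact_mod_cast Int.thirteen_le_sq_add_sq_of_modEq hc hM
  have hlt := (abs_lt.mp hη).2
  linarith
end
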